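/- Let m ≥ n with n even. Let V ⊆ ℂ^{n×m} be the complex subspace of matrices whose nonzero entries are confined to the first-column positions (n−2t, 1) for 0 ≤ t < n/2, and let W ⊆ ℂ^{m×n} be the complex subspace of matrices whose nonzero entries are confined to the last-row positions (m, 2t+1) for 0 ≤ t < n/2. Then for every pair (B,A) ∈ ℂ^{n×m} × ℂ^{m×n} there exists exactly one pair (D,E) ∈ V × W such that (B − D, A − E) ∈ T(J_m(0), J_n(0)); that is, ℂ^{n×m} × ℂ^{m×n} = T(J_m(0), J_n(0)) ⊕_ℝ (V × W). -/
import Mathlib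


open Matrix

/-- The `n×n` upper-triangular Jordan block with eigenvalue `l`. -/
noncomputable def Jmat (n : ℕ) (l : ℂ) : Matrix (Fin n) (Fin n) ℂ :=
  Matrix.of fun i j =>
    if (i : ℕ) = (j : ℕ) then l
    else if (j : ℕ) = (i : ℕ) + 1 then 1 else 0

/-- The symmetric matrix `Δ_n`: (1-based) entry `(j,k)` is `1` if `j+k = n+1`,
`i` if `j+k = n+2`, and `0` otherwise. -/
noncomputable def Dmat (n : ℕ) : Matrix (Fin n) (Fin n) ℂ :=
  Matrix.of fun i j =>
    if (i : ℕ) + (j : ℕ) + 1 = n then 1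
    else if (i : ℕ) + (j : ℕ) = n then Complex.I
    else 0

/-- The `2m×2m` block matrix `H_m(l) = [[0, I],[J_m(l), 0]]`. -/
noncomputable def Hmat (m : ℕ) (l : ℂ) : Matrix (Fin m ⊕ Fin m) (Fin m ⊕ Fin m) ℂ :=
  Matrix.fromBlocks 0 1 (Jmat m l) 0

/-- `T(A) = {CᴴA + AC}`, the tangent space to the *congruence class of `A`. -/
def Tset {n : Type*} [Fintype n] (A : Matrix n n ℂ) : Set (Matrix n n ℂ) :=
  {X | ∃ C : Matrix n n ℂ, X = Cᴴ * A + A * C}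

/-- `T(M,N) = {(SᴴM + NR, RᴴN + MS)}`. -/
def Tpair {p q : Type*} [Fintype p] [Fintype q]
    (M : Matrix p p ℂ) (N : Matrix q q ℂ) :
    Set (Matrix q p ℂ × Matrix p q ℂ) :=
  {X | ∃ (S : Matrix p q ℂ) (R : Matrix q p ℂ),
      X = (Sᴴ * M + N * R, Rᴴ * N + M * S)}


namespace Stmt15Aux

mutual
noncomputable def xD (Bf Af : ℕ → ℕ → ℂ) : ℕ → ℕ → ℂ
  | 0, _ => 0
  | a+1, 0 => Bf a 0
  | a+1, b+1 => Bf a (b+1) - (starRingEnd ℂ) (yD Bf Af b a)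
termination_by a b => a + b

noncomputable def yD (Bf Af : ℕ → ℕ → ℂ) : ℕ → ℕ → ℂ
  | 0, _ => 0
  | k+1, 0 => Af k 0
  | k+1, i+1 => Af k (i+1) - (starRingEnd ℂ) (xD Bf Af i k)
termination_by k i => k + i
end

mutual
noncomputable def xU (m n : ℕ) (Af Bf : ℕ → ℕ → ℂ) (a b : ℕ) : ℂ :=
  (starRingEnd ℂ) (Af b (a+1) - (if _h : b + 2 ≤ m then yU m n Af Bf (b+1) (a+1) else 0))
termination_by (m - b) + (n - a)
decreasing_by omega

noncomputable def yU (m n : ℕ) (Af Bf : ℕ → ℕ → ℂ) (k i : ℕ) : ℂ :=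
  (starRingEnd ℂ) (Bf i (k+1) - (if _h : i + 2 ≤ n then xU m n Af Bf (i+1) (k+1) else 0))
termination_by (m - k) + (n - i)
decreasing_by omega
end

def Upx (m n a b : ℕ) : Prop :=
  a % 2 = 0 ∧ a + m ≠ b + n ∧ (a + m < b + n → (b + 1 + m) % 2 = 0)

instance (m n a b : ℕ) : Decidable (Upx m n a b) := by unfold Upx; infer_instance

def Upy (m n k i : ℕ) : Prop :=
  i % 2 = 1 ∧ k + n ≠ i + m ∧ (i + m < k + n → (k + m) % 2 = 0)

instance (m n k i : ℕ) : Decidable (Upy m n k i) := by unfold Upy; infer_instance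

noncomputable def xx (m n : ℕ) (Bf Af : ℕ → ℕ → ℂ) (a b : ℕ) : ℂ :=
  if Upx m n a b then xU m n Af Bf a b else xD Bf Af a b

noncomputable def yy (m n : ℕ) (Bf Af : ℕ → ℕ → ℂ) (k i : ℕ) : ℂ :=
  if Upy m n k i then yU m n Af Bf k i else yD Bf Af k i

noncomputable def Df (m n : ℕ) (Bf Af : ℕ → ℕ → ℂ) (i j : ℕ) : ℂ :=
  if j = 0 ∧ i % 2 = 1 then Bf i 0 - (if i + 2 ≤ n then xU m n Af Bf (i+1) 0 else 0) else 0

noncomputable def Ef (m n : ℕ) (Bf Af : ℕ → ℕ → ℂ) (p q : ℕ) : ℂ :=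
  if p + 1 = m ∧ q % 2 = 0 then
    Af p q - (if 1 ≤ q then (starRingEnd ℂ) (xD Bf Af (q-1) p) else 0) else 0

lemma eq1 (m n : ℕ) (hmn : n ≤ m) (hn : n % 2 = 0) (Bf Af : ℕ → ℕ → ℂ)
    (i j : ℕ) (hi : i < n) (hj : j < m) :
    Bf i j - Df m n Bf Af i j =
      (if 1 ≤ j then (starRingEnd ℂ) (yy m n Bf Af (j-1) i) else 0) +
      (if i + 1 < n then xx m n Bf Af (i+1) j else 0) := by
  by_cases hni : i + 1 < n
  · rw [if_pos hni]
    by_cases hU : Upx m n (i+1) j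
    · rw [xx, if_pos hU]
      rcases Nat.eq_zero_or_pos j with hj0 | hj1
      · subst hj0
        rw [if_neg (by omega)]
        have hio : i % 2 = 1 := by
          have := hU.1; omega
        rw [Df, if_pos ⟨rfl, hio⟩, if_pos (by omega : i + 2 ≤ n)]
        ring
      · obtain ⟨j', rfl⟩ : ∃ j', j = j' + 1 := ⟨j - 1, by omega⟩
        have hUy : Upy m n j' i := by
          obtain ⟨h1, h2, h3⟩ := hU
          exact ⟨by omega, by omega, by omega⟩
        rw [if_pos (by omega : 1 ≤ j' + 1)]
        have : j' + 1 - 1 = j' := by omega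
        rw [this, yy, if_pos hUy, yU, dif_pos (by omega : i + 2 ≤ n)]
        rw [Df, if_neg (by omega)]
        simp only [map_sub, Complex.conj_conj]
        ring
    · rw [xx, if_neg hU]
      rcases Nat.eq_zero_or_pos j with hj0 | hj1
      · subst hj0
        rw [if_neg (by omega)]
        have hie : ¬ (i % 2 = 1) := by
          intro hio
          exact hU ⟨by omega, by omega, by omega⟩
        rw [Df, if_neg (by tauto), xD]
        ring
      · obtain ⟨j', rfl⟩ : ∃ j', j = j' + 1 := ⟨j - 1, by omega⟩
        have hUy : ¬ Upy m n j' i := by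
          intro ⟨h1, h2, h3⟩
          exact hU ⟨by omega, by omega, by omega⟩
        rw [if_pos (by omega : 1 ≤ j' + 1)]
        have : j' + 1 - 1 = j' := by omega
        rw [this, yy, if_neg hUy, xD, Df, if_neg (by omega)]
        ring
  · rw [if_neg hni]
    have hie : i + 1 = n := by omega
    rcases Nat.eq_zero_or_pos j with hj0 | hj1
    · subst hj0
      rw [if_neg (by omega)]
      rw [Df, if_pos ⟨rfl, by omega⟩, if_neg (by omega)]
      ring
    · obtain ⟨j', rfl⟩ : ∃ j', j = j' + 1 := ⟨j - 1, by omega⟩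
      have hUy : Upy m n j' i := ⟨by omega, by omega, by omega⟩
      rw [if_pos (by omega : 1 ≤ j' + 1)]
      have : j' + 1 - 1 = j' := by omega
      rw [this, yy, if_pos hUy, yU, dif_neg (by omega : ¬ (i + 2 ≤ n)), Df, if_neg (by omega)]
      simp only [map_sub, Complex.conj_conj, map_zero]
      ring

lemma eq2 (m n : ℕ) (hmn : n ≤ m) (hn : n % 2 = 0) (Bf Af : ℕ → ℕ → ℂ)
    (p q : ℕ) (hp : p < m) (hq : q < n) :
    Af p q - Ef m n Bf Af p q =
      (if 1 ≤ q then (starRingEnd ℂ) (xx m n Bf Af (q-1) p) else 0) +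
      (if p + 1 < m then yy m n Bf Af (p+1) q else 0) := by
  by_cases hpm : p + 1 < m
  · rw [if_pos hpm]
    by_cases hU : Upy m n (p+1) q
    · have hq1 : 1 ≤ q := by have := hU.1; omega
      obtain ⟨q', rfl⟩ : ∃ q', q = q' + 1 := ⟨q - 1, by omega⟩
      have hUx : Upx m n q' p := by
        obtain ⟨h1, h2, h3⟩ := hU
        exact ⟨by omega, by omega, by omega⟩
      rw [if_pos hq1]
      have : q' + 1 - 1 = q' := by omega
      rw [this, xx, if_pos hUx, xU, dif_pos (by omega : p + 2 ≤ m)]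
      rw [yy, if_pos hU, Ef, if_neg (by omega)]
      simp only [map_sub, Complex.conj_conj]
      ring
    · rw [yy, if_neg hU, Ef, if_neg (by omega)]
      rcases Nat.eq_zero_or_pos q with hq0 | hq1
      · subst hq0
        rw [if_neg (by omega), yD]
        ring
      · obtain ⟨q', rfl⟩ : ∃ q', q = q' + 1 := ⟨q - 1, by omega⟩
        have hUx : ¬ Upx m n q' p := by
          intro ⟨h1, h2, h3⟩
          exact hU ⟨by omega, by omega, by omega⟩
        rw [if_pos (by omega : 1 ≤ q' + 1)]
        have : q' + 1 - 1 = q' := by omega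
        rw [this, xx, if_neg hUx, yD]
        ring
  · rw [if_neg hpm]
    have hpe : p + 1 = m := by omega
    rcases Nat.eq_zero_or_pos q with hq0 | hq1
    · subst hq0
      rw [if_neg (by omega), Ef, if_pos ⟨hpe, rfl⟩, if_neg (by omega)]
      ring
    · obtain ⟨q', rfl⟩ : ∃ q', q = q' + 1 := ⟨q - 1, by omega⟩
      rw [if_pos (by omega : 1 ≤ q' + 1)]
      have hq'1 : q' + 1 - 1 = q' := by omega
      rcases Nat.even_or_odd q' with he | ho
      · have hq'e : q' % 2 = 0 := Nat.even_iff.mp he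
        have hUx : Upx m n q' p := ⟨hq'e, by omega, fun _ => by omega⟩
        rw [hq'1, xx, if_pos hUx, xU, dif_neg (by omega : ¬ (p + 2 ≤ m)),
          Ef, if_neg (by omega)]
        simp only [map_sub, Complex.conj_conj, map_zero]
        ring
      · have hq'o : q' % 2 = 1 := Nat.odd_iff.mp ho
        rw [hq'1, Ef, if_pos (⟨hpe, by omega⟩ : p + 1 = m ∧ (q' + 1) % 2 = 0),
          if_pos (by omega : 1 ≤ q' + 1), hq'1,
          xx, if_neg (fun h => by have := h.1; omega)]
        ring

lemma Jmul_apply {k l : ℕ} (M : Matrix (Fin k) (Fin l) ℂ) (i : Fin k) (j : Fin l) :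
    (Jmat k 0 * M) i j = if h : (i : ℕ) + 1 < k then M ⟨(i : ℕ) + 1, h⟩ j else 0 := by
  rw [Matrix.mul_apply]
  by_cases h : (i : ℕ) + 1 < k
  · rw [dif_pos h]
    have hkey : ∀ x : Fin k, Jmat k 0 i x * M x j =
        if x = (⟨(i : ℕ) + 1, h⟩ : Fin k) then M x j else 0 := by
      intro x
      simp only [Jmat, Matrix.of_apply]
      rcases eq_or_ne ((i : ℕ)) ((x : ℕ)) with h1 | h1
      · rw [if_pos h1, zero_mul, if_neg (fun hx => by
          rw [hx] at h1; simp at h1)]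
      · rw [if_neg h1]
        by_cases h2 : (x : ℕ) = (i : ℕ) + 1
        · rw [if_pos h2, one_mul, if_pos (Fin.ext h2)]
        · rw [if_neg h2, zero_mul, if_neg (fun hx => h2 (by rw [hx]))]
    rw [Finset.sum_congr rfl (fun x _ => hkey x), Finset.sum_ite_eq' Finset.univ _ (fun x => M x j)]
    simp
  · rw [dif_neg h]
    apply Finset.sum_eq_zero
    intro x _
    simp only [Jmat, Matrix.of_apply]
    have h2 : ¬ ((x : ℕ) = (i : ℕ) + 1) := by have := x.isLt; omega
    rcases eq_or_ne ((i : ℕ)) ((x : ℕ)) with h1 | h1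
    · rw [if_pos h1, zero_mul]
    · rw [if_neg h1, if_neg h2, zero_mul]

lemma mulJ_apply {k l : ℕ} (M : Matrix (Fin k) (Fin l) ℂ) (i : Fin k) (j : Fin l) :
    (M * Jmat l 0) i j =
      if 1 ≤ (j : ℕ) then M i ⟨(j : ℕ) - 1, Nat.lt_of_le_of_lt (Nat.sub_le _ _) j.isLt⟩
      else 0 := by
  rw [Matrix.mul_apply]
  by_cases h : 1 ≤ (j : ℕ)
  · rw [if_pos h]
    set a : Fin l := ⟨(j : ℕ) - 1, Nat.lt_of_le_of_lt (Nat.sub_le _ _) j.isLt⟩ with ha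
    have hkey : ∀ x : Fin l, M i x * Jmat l 0 x j = if x = a then M i x else 0 := by
      intro x
      simp only [Jmat, Matrix.of_apply]
      rcases eq_or_ne ((x : ℕ)) ((j : ℕ)) with h1 | h1
      · rw [if_pos h1, mul_zero, if_neg (fun hx => by
          rw [hx] at h1; simp only [ha] at h1; omega)]
      · rw [if_neg h1]
        by_cases h2 : (j : ℕ) = (x : ℕ) + 1
        · rw [if_pos h2, mul_one, if_pos (Fin.ext (by simp only [ha]; omega))]
        · rw [if_neg h2, mul_zero, if_neg (fun hx => h2 (by subst hx; simp only [ha]; omega))]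
    rw [Finset.sum_congr rfl (fun x _ => hkey x), Finset.sum_ite_eq' Finset.univ _ (fun x => M i x)]
    simp
  · rw [if_neg h]
    apply Finset.sum_eq_zero
    intro x _
    simp only [Jmat, Matrix.of_apply]
    have h2 : ¬ ((j : ℕ) = (x : ℕ) + 1) := by omega
    rcases eq_or_ne ((x : ℕ)) ((j : ℕ)) with h1 | h1
    · rw [if_pos h1, mul_zero]
    · rw [if_neg h1, if_neg h2, mul_zero]

end Stmt15Aux

open Stmt15Aux

/-- For `m ≥ n`, `n` even: `ℂ^{n×m} × ℂ^{m×n} = T(J_m(0), J_n(0)) ⊕_ℝ (V × W)`,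
where `V` consists of matrices supported on the first-column positions
`(n−2t, 1)` for `0 ≤ t < n/2`, and `W` of matrices supported on the last-row
positions `(m, 2t+1)` for `0 ≤ t < n/2`. -/
theorem stmt15 (m n : ℕ) (hmn : n ≤ m) (hn : n % 2 = 0)
    (B : Matrix (Fin n) (Fin m) ℂ) (A : Matrix (Fin m) (Fin n) ℂ) :
    ∃! DE : Matrix (Fin n) (Fin m) ℂ × Matrix (Fin m) (Fin n) ℂ,
      ((∀ (p : Fin n) (q : Fin m), DE.1 p q ≠ 0 →
          (q : ℕ) = 0 ∧ ∃ t : ℕ, 2 * t < n ∧ (p : ℕ) + 2 * t + 1 = n) ∧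
       (∀ (p : Fin m) (q : Fin n), DE.2 p q ≠ 0 →
          (p : ℕ) + 1 = m ∧ (q : ℕ) % 2 = 0)) ∧
      (B - DE.1, A - DE.2) ∈ Tpair (Jmat m 0) (Jmat n 0) := by
  classical
  rcases Nat.eq_zero_or_pos n with hn0 | hn0
  · subst hn0
    refine ⟨(0, 0), ⟨⟨fun p _ _ => p.elim0, fun _ q _ => q.elim0⟩, 0, 0, ?_⟩, ?_⟩
    · have e1 : B - 0 = (0 : Matrix (Fin m) (Fin 0) ℂ)ᴴ * Jmat m 0 +
          Jmat 0 0 * (0 : Matrix (Fin 0) (Fin m) ℂ) := by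
        ext i j; exact i.elim0
      have e2 : A - 0 = (0 : Matrix (Fin 0) (Fin m) ℂ)ᴴ * Jmat 0 0 +
          Jmat m 0 * (0 : Matrix (Fin m) (Fin 0) ℂ) := by
        ext i j; exact j.elim0
      rw [e1, e2]
    · rintro ⟨D', E'⟩ -
      have h1 : D' = 0 := by ext i j; exact i.elim0
      have h2 : E' = 0 := by ext i j; exact j.elim0
      rw [Prod.mk.injEq]
      exact ⟨h1, h2⟩
  · have hn2 : 2 ≤ n := by omega
    set Bf : ℕ → ℕ → ℂ :=
      fun i j => if h : i < n ∧ j < m then B ⟨i, h.1⟩ ⟨j, h.2⟩ else 0 with hBf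
    set Af : ℕ → ℕ → ℂ :=
      fun p q => if h : p < m ∧ q < n then A ⟨p, h.1⟩ ⟨q, h.2⟩ else 0 with hAf
    have Bf_def : ∀ (i : Fin n) (j : Fin m), Bf (i : ℕ) (j : ℕ) = B i j := by
      intro i j; rw [hBf]; exact dif_pos ⟨i.isLt, j.isLt⟩
    have Af_def : ∀ (p : Fin m) (q : Fin n), Af (p : ℕ) (q : ℕ) = A p q := by
      intro p q; rw [hAf]; exact dif_pos ⟨p.isLt, q.isLt⟩
    set D : Matrix (Fin n) (Fin m) ℂ :=
      Matrix.of (fun i j => Df m n Bf Af (i : ℕ) (j : ℕ)) with hD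
    set E : Matrix (Fin m) (Fin n) ℂ :=
      Matrix.of (fun p q => Ef m n Bf Af (p : ℕ) (q : ℕ)) with hE
    set S : Matrix (Fin m) (Fin n) ℂ :=
      Matrix.of (fun p q => yy m n Bf Af (p : ℕ) (q : ℕ)) with hS
    set R : Matrix (Fin n) (Fin m) ℂ :=
      Matrix.of (fun a b => xx m n Bf Af (a : ℕ) (b : ℕ)) with hR
    have hmem1 : B - D = Sᴴ * Jmat m 0 + Jmat n 0 * R := by
      ext i j
      rw [Matrix.sub_apply, Matrix.add_apply, mulJ_apply, Jmul_apply, ← Bf_def i j]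
      have hDij : D i j = Df m n Bf Af (i : ℕ) (j : ℕ) := rfl
      rw [hDij, eq1 m n hmn hn Bf Af (i : ℕ) (j : ℕ) i.isLt j.isLt]
      congr 1
      all_goals
        first
        | rfl
        | (by_cases h1 : 1 ≤ (j : ℕ)
           · rw [if_pos h1, if_pos h1, Matrix.conjTranspose_apply]; rfl
           · rw [if_neg h1, if_neg h1])
        | (by_cases h2 : (i : ℕ) + 1 < n
           · rw [if_pos h2, dif_pos h2]; rfl
           · rw [if_neg h2, dif_neg h2])
    have hmem2 : A - E = Rᴴ * Jmat n 0 + Jmat m 0 * S := by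
      ext p q
      rw [Matrix.sub_apply, Matrix.add_apply, mulJ_apply, Jmul_apply, ← Af_def p q]
      have hEpq : E p q = Ef m n Bf Af (p : ℕ) (q : ℕ) := rfl
      rw [hEpq, eq2 m n hmn hn Bf Af (p : ℕ) (q : ℕ) p.isLt q.isLt]
      congr 1
      all_goals
        first
        | rfl
        | (by_cases h1 : 1 ≤ (q : ℕ)
           · rw [if_pos h1, if_pos h1, Matrix.conjTranspose_apply]; rfl
           · rw [if_neg h1, if_neg h1])
        | (by_cases h2 : (p : ℕ) + 1 < m
           · rw [if_pos h2, dif_pos h2]; rfl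
           · rw [if_neg h2, dif_neg h2])
    refine ⟨(D, E), ⟨⟨?_, ?_⟩, S, R, ?_⟩, ?_⟩
    · intro p q hpq
      have hDpq : D p q = Df m n Bf Af (p : ℕ) (q : ℕ) := rfl
      by_cases hc : (q : ℕ) = 0 ∧ (p : ℕ) % 2 = 1
      · have hp := p.isLt
        exact ⟨hc.1, (n - (p : ℕ) - 1) / 2, by omega, by omega⟩
      · exact absurd (show D p q = 0 by rw [hDpq, Df, if_neg hc]) hpq
    · intro p q hpq
      have hEpq : E p q = Ef m n Bf Af (p : ℕ) (q : ℕ) := rfl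
      by_cases hc : (p : ℕ) + 1 = m ∧ (q : ℕ) % 2 = 0
      · exact hc
      · exact absurd (show E p q = 0 by rw [hEpq, Ef, if_neg hc]) hpq
    · have hpair : (B - D, A - E) =
          (Sᴴ * Jmat m 0 + Jmat n 0 * R, Rᴴ * Jmat n 0 + Jmat m 0 * S) := by
        rw [hmem1, hmem2]
      exact hpair
    · rintro ⟨D', E'⟩ ⟨⟨hsD', hsE'⟩, S', R', hT'⟩
      have hT1' : B - D' = S'ᴴ * Jmat m 0 + Jmat n 0 * R' := congrArg Prod.fst hT'
      have hT2' : A - E' = R'ᴴ * Jmat n 0 + Jmat m 0 * S' := congrArg Prod.snd hT'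
      set σf : ℕ → ℕ → ℂ :=
        fun p q => if h : p < m ∧ q < n then (S' - S) ⟨p, h.1⟩ ⟨q, h.2⟩ else 0 with hσf
      set ρf : ℕ → ℕ → ℂ :=
        fun a b => if h : a < n ∧ b < m then (R' - R) ⟨a, h.1⟩ ⟨b, h.2⟩ else 0 with hρf
      set δf : ℕ → ℕ → ℂ :=
        fun i j => if h : i < n ∧ j < m then (D - D') ⟨i, h.1⟩ ⟨j, h.2⟩ else 0 with hδf
      set εf : ℕ → ℕ → ℂ :=
        fun p q => if h : p < m ∧ q < n then (E - E') ⟨p, h.1⟩ ⟨q, h.2⟩ else 0 with hεf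
      have hDmat : D - D' = (S' - S)ᴴ * Jmat m 0 + Jmat n 0 * (R' - R) := by
        have h0 : D - D' = (B - D') - (B - D) := by abel
        rw [h0, hT1', hmem1, Matrix.conjTranspose_sub, Matrix.sub_mul, Matrix.mul_sub]
        abel
      have hEmat : E - E' = (R' - R)ᴴ * Jmat n 0 + Jmat m 0 * (S' - S) := by
        have h0 : E - E' = (A - E') - (A - E) := by abel
        rw [h0, hT2', hmem2, Matrix.conjTranspose_sub, Matrix.sub_mul, Matrix.mul_sub]
        abel
      have rel1 : ∀ i j, i < n → j < m → δf i j =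
          (if 1 ≤ j then (starRingEnd ℂ) (σf (j-1) i) else 0) +
          (if i + 1 < n then ρf (i+1) j else 0) := by
        intro i j hi hj
        have h := Matrix.ext_iff.mpr hDmat ⟨i, hi⟩ ⟨j, hj⟩
        rw [Matrix.add_apply, mulJ_apply, Jmul_apply] at h
        dsimp only at h
        rw [hδf]
        dsimp only
        rw [dif_pos (⟨hi, hj⟩ : i < n ∧ j < m), h]
        congr 1
        · by_cases h1 : 1 ≤ j
          · rw [if_pos h1, if_pos h1, Matrix.conjTranspose_apply, hσf]
            dsimp only
            rw [dif_pos (⟨by omega, hi⟩ : j - 1 < m ∧ i < n)]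
            rfl
          · rw [if_neg h1, if_neg h1]
        · by_cases h2 : i + 1 < n
          · rw [dif_pos h2, if_pos h2, hρf]
            dsimp only
            rw [dif_pos (⟨h2, hj⟩ : i + 1 < n ∧ j < m)]
          · rw [dif_neg h2, if_neg h2]
      have rel2 : ∀ p q, p < m → q < n → εf p q =
          (if 1 ≤ q then (starRingEnd ℂ) (ρf (q-1) p) else 0) +
          (if p + 1 < m then σf (p+1) q else 0) := by
        intro p q hp hq
        have h := Matrix.ext_iff.mpr hEmat ⟨p, hp⟩ ⟨q, hq⟩
        rw [Matrix.add_apply, mulJ_apply, Jmul_apply] at h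
        dsimp only at h
        rw [hεf]
        dsimp only
        rw [dif_pos (⟨hp, hq⟩ : p < m ∧ q < n), h]
        congr 1
        · by_cases h1 : 1 ≤ q
          · rw [if_pos h1, if_pos h1, Matrix.conjTranspose_apply, hρf]
            dsimp only
            rw [dif_pos (⟨by omega, hp⟩ : q - 1 < n ∧ p < m)]
            rfl
          · rw [if_neg h1, if_neg h1]
        · by_cases h2 : p + 1 < m
          · rw [dif_pos h2, if_pos h2, hσf]
            dsimp only
            rw [dif_pos (⟨h2, hq⟩ : p + 1 < m ∧ q < n)]
          · rw [dif_neg h2, if_neg h2]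
      have hδ0 : ∀ i j, i < n → j < m → ¬(j = 0 ∧ i % 2 = 1) → δf i j = 0 := by
        intro i j hi hj hc
        rw [hδf]
        dsimp only
        rw [dif_pos (⟨hi, hj⟩ : i < n ∧ j < m), Matrix.sub_apply]
        have h1 : D ⟨i, hi⟩ ⟨j, hj⟩ = 0 := by
          show Df m n Bf Af i j = 0
          rw [Df, if_neg hc]
        have h2 : D' ⟨i, hi⟩ ⟨j, hj⟩ = 0 := by
          by_contra hne
          obtain ⟨hq0, t, ht1, ht2⟩ := hsD' ⟨i, hi⟩ ⟨j, hj⟩ hne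
          dsimp only at hq0 ht2
          exact hc ⟨hq0, by omega⟩
        rw [h1, h2, sub_zero]
      have hε0 : ∀ p q, p < m → q < n → ¬(p + 1 = m ∧ q % 2 = 0) → εf p q = 0 := by
        intro p q hp hq hc
        rw [hεf]
        dsimp only
        rw [dif_pos (⟨hp, hq⟩ : p < m ∧ q < n), Matrix.sub_apply]
        have h1 : E ⟨p, hp⟩ ⟨q, hq⟩ = 0 := by
          show Ef m n Bf Af p q = 0
          rw [Ef, if_neg hc]
        have h2 : E' ⟨p, hp⟩ ⟨q, hq⟩ = 0 := by
          by_contra hne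
          obtain ⟨hpm, hqe⟩ := hsE' ⟨p, hp⟩ ⟨q, hq⟩ hne
          dsimp only at hpm hqe
          exact hc ⟨hpm, hqe⟩
        rw [h1, h2, sub_zero]
      have key1 : ∀ i j, i < n → j < m → δf i j = 0 := by
        intro i j hi hj
        by_cases hc : j = 0 ∧ i % 2 = 1
        case neg => exact hδ0 i j hi hj hc
        obtain ⟨rfl, hio⟩ := hc
        by_cases hlast : i + 1 = n
        · have h := rel1 i 0 hi hj
          rw [if_neg (by omega), if_neg (by omega)] at h
          simpa using h
        · have hchain : ∀ s, i + 2 + 2*s ≤ n → ρf (i+1+2*s) (2*s) = δf i 0 := by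
            intro s
            induction s with
            | zero =>
              intro _
              have h0 := rel1 i 0 hi hj
              rw [if_neg (by omega), if_pos (by omega)] at h0
              rw [show i+1+2*0 = i+1 by omega, show 2*0 = 0 by omega]
              linear_combination -h0
            | succ s ih =>
              intro hs
              have hprev := ih (by omega)
              have h2 := rel2 (2*s) (i+2+2*s) (by omega) (by omega)
              rw [hε0 (2*s) (i+2+2*s) (by omega) (by omega) (by omega),
                if_pos (by omega), if_pos (by omega),
                show i+2+2*s-1 = i+1+2*s by omega, hprev] at h2
              have h3 := rel1 (i+2+2*s) (2*s+2) (by omega) (by omega)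
              rw [hδ0 (i+2+2*s) (2*s+2) (by omega) (by omega) (by omega),
                if_pos (by omega), if_pos (by omega),
                show 2*s+2-1 = 2*s+1 by omega] at h3
              have hσ : σf (2*s+1) (i+2+2*s) = - (starRingEnd ℂ) (δf i 0) := by
                linear_combination -h2
              rw [hσ, map_neg, Complex.conj_conj] at h3
              rw [show i+1+2*(s+1) = i+2+2*s+1 by omega, show 2*(s+1) = 2*s+2 by omega]
              linear_combination -h3
          obtain ⟨s, hs⟩ : ∃ s, 2*s + 3 + i = n := ⟨(n - 3 - i)/2, by omega⟩
          have hρ := hchain s (by omega)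
          have h2 := rel2 (2*s) (n-1) (by omega) (by omega)
          rw [hε0 (2*s) (n-1) (by omega) (by omega) (by omega),
            if_pos (by omega), if_pos (by omega),
            show n-1-1 = i+1+2*s by omega, hρ] at h2
          have h3 := rel1 (n-1) (2*s+2) (by omega) (by omega)
          rw [hδ0 (n-1) (2*s+2) (by omega) (by omega) (by omega),
            if_pos (by omega), if_neg (by omega),
            show 2*s+2-1 = 2*s+1 by omega] at h3
          have hσ : σf (2*s+1) (n-1) = - (starRingEnd ℂ) (δf i 0) := by
            linear_combination -h2
          rw [hσ, map_neg, Complex.conj_conj] at h3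
          linear_combination h3
      have key2 : ∀ p q, p < m → q < n → εf p q = 0 := by
        intro p q hp hq
        by_cases hc : p + 1 = m ∧ q % 2 = 0
        case neg => exact hε0 p q hp hq hc
        obtain ⟨hpm, hqe⟩ := hc
        rcases Nat.eq_zero_or_pos q with rfl | hq1
        · have h := rel2 p 0 hp hq
          rw [if_neg (by omega), if_neg (by omega)] at h
          simpa using h
        · have hq2 : 2 ≤ q := by omega
          have hchain : ∀ s, 2*s + 2 ≤ q → ρf (2*s+1) (m-1-q+2+2*s) = 0 := by
            intro s
            induction s with
            | zero =>
              intro _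
              have h0 := rel2 (m-1-q) 0 (by omega) (by omega)
              rw [hε0 (m-1-q) 0 (by omega) (by omega) (by omega),
                if_neg (by omega), if_pos (by omega)] at h0
              have h1 := rel1 0 (m-1-q+2) (by omega) (by omega)
              rw [hδ0 0 (m-1-q+2) (by omega) (by omega) (by omega),
                if_pos (by omega), if_pos (by omega),
                show m-1-q+2-1 = m-1-q+1 by omega] at h1
              have hσ : σf (m-1-q+1) 0 = 0 := by linear_combination -h0
              rw [hσ, map_zero] at h1
              rw [show 2*0+1 = 0+1 by omega, show m-1-q+2+2*0 = m-1-q+2 by omega]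
              linear_combination -h1
            | succ s ih =>
              intro hs
              have hprev := ih (by omega)
              have h2 := rel2 (m-1-q+2+2*s) (2*s+2) (by omega) (by omega)
              rw [hε0 (m-1-q+2+2*s) (2*s+2) (by omega) (by omega) (by omega),
                if_pos (by omega), if_pos (by omega),
                show 2*s+2-1 = 2*s+1 by omega, hprev, map_zero] at h2
              have h3 := rel1 (2*s+2) (m-1-q+4+2*s) (by omega) (by omega)
              rw [hδ0 (2*s+2) (m-1-q+4+2*s) (by omega) (by omega) (by omega),
                if_pos (by omega), if_pos (by omega),
                show m-1-q+4+2*s-1 = m-1-q+2+2*s+1 by omega] at h3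
              have hσ : σf (m-1-q+2+2*s+1) (2*s+2) = 0 := by linear_combination -h2
              rw [hσ, map_zero] at h3
              rw [show 2*(s+1)+1 = 2*s+2+1 by omega,
                show m-1-q+2+2*(s+1) = m-1-q+4+2*s by omega]
              linear_combination -h3
          obtain ⟨s, hs⟩ : ∃ s, 2*s + 2 = q := ⟨(q-2)/2, by omega⟩
          have hρ := hchain s (by omega)
          have h4 := rel2 (m-1) q (by omega) hq
          rw [if_pos (by omega), if_neg (by omega),
            show q-1 = 2*s+1 by omega,
            show m-1 = m-1-q+2+2*s by omega, hρ, map_zero] at h4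
          have hp' : p = m-1-q+2+2*s := by omega
          rw [hp']
          simpa using h4
      have hDeq : D' = D := by
        ext i j
        have h := key1 (i : ℕ) (j : ℕ) i.isLt j.isLt
        rw [hδf] at h
        dsimp only at h
        rw [dif_pos (⟨i.isLt, j.isLt⟩ : (i : ℕ) < n ∧ (j : ℕ) < m), Matrix.sub_apply] at h
        have h2 : D i j - D' i j = 0 := by
          simpa [Fin.eta] using h
        exact (sub_eq_zero.mp h2).symm
      have hEeq : E' = E := by
        ext p q
        have h := key2 (p : ℕ) (q : ℕ) p.isLt q.isLt
        rw [hεf] at h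
        dsimp only at h
        rw [dif_pos (⟨p.isLt, q.isLt⟩ : (p : ℕ) < m ∧ (q : ℕ) < n), Matrix.sub_apply] at h
        have h2 : E p q - E' p q = 0 := by
          simpa [Fin.eta] using h
        exact (sub_eq_zero.mp h2).symm
      rw [Prod.mk.injEq]
      exact ⟨hDeq, hEeq⟩
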